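/- For every complex number s with Re s > −1 and s ≠ 1, ζ(s) = 1/(s−1) + 1/2 + (1/2) · ∑_{k=2}^{∞} ( (k−1) · (s)_k / (k+1)! ) · (ζ(s+k) − 1), where (s)_k is the ascending Pochhammer symbol. -/

import Mathlib

/-!
Both sides are compared first for `re s > 1`. With `z = 1 / (n + 2)`, the binomial series
`(1 - z) ^ (-s) = ∑ (s)_k z ^ k / k!` and its antiderivative give, after multiplying by
`(n + 2) ^ (-s)`,
`∑_k (k + 1) (s)_(k+2) / (k + 3)! · (n + 2) ^ (-s-k-2)
  = (n + 1) ^ (-s) + (n + 2) ^ (-s) - 2 ((n + 1) ^ (1-s) - (n + 2) ^ (1-s)) / (s - 1)`.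
Summing over `n ≥ 0`, the double series converges absolutely; summing columns first yields the
series of the theorem, while summing rows yields `2 ζ(s) - 1 - 2 / (s - 1)` because the last
term telescopes. For `re s > -1` the terms are bounded by `C · (R)_(k+2) / (k+2)! · 2 ^ (-k)`
locally uniformly, so the right-hand side is holomorphic there, and the identity theorem on the
half-plane `re s > -1` slit along `[1, ∞)` extends the equality.
-/

open Filter Topology Polynomial Complex

lemma Ring.choose_add_sub_one_eq_ascPochhammer_div {R : Type*} [Field R] [CharZero R]
    [BinomialRing R] (s : R) (k : ℕ) :
    Ring.choose (s + k - 1) k = (ascPochhammer R k).eval s / k.factorial := by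
  rw [← Ring.multichoose_eq, eq_div_iff (by exact_mod_cast k.factorial_ne_zero), mul_comm,
    ← nsmul_eq_mul, Ring.factorial_nsmul_multichoose_eq_ascPochhammer, ascPochhammer_smeval_eq_eval]

lemma ascPochhammer_eval_sub_one_succ {R : Type*} [CommRing R] (s : R) (k : ℕ) :
    (ascPochhammer R (k + 1)).eval (s - 1) = (s - 1) * (ascPochhammer R k).eval s := by
  simp [ascPochhammer_succ_left]

theorem ascPochhammer_eval_nonneg {S : Type*} [Semiring S] [PartialOrder S] [IsOrderedRing S]
    {x : S} (hx : 0 ≤ x) (k : ℕ) : 0 ≤ (ascPochhammer S k).eval x := by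
  induction k with
  | zero => simp
  | succ k ih => rw [ascPochhammer_succ_eval]; exact mul_nonneg ih (add_nonneg hx k.cast_nonneg)

theorem norm_ascPochhammer_eval_le {R : Type*} [NormedCommRing R] [NormOneClass R] {s : R} {M : ℝ}
    (hs : ‖s‖ ≤ M) (k : ℕ) : ‖(ascPochhammer R k).eval s‖ ≤ (ascPochhammer ℝ k).eval M := by
  induction k with
  | zero => simp
  | succ k ih =>
    rw [ascPochhammer_succ_eval, ascPochhammer_succ_eval]
    have hsk : ‖s + k‖ ≤ M + k :=
      (norm_add_le _ _).trans (add_le_add hs (by simpa using Nat.norm_cast_le (α := R) k))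
    exact (norm_mul_le _ _).trans (mul_le_mul ih hsk (norm_nonneg _) ((norm_nonneg _).trans ih))

theorem hasSum_ascPochhammer_div_factorial_mul_pow (s : ℂ) {z : ℂ} (hz : ‖z‖ < 1) :
    HasSum (fun k : ℕ ↦ (ascPochhammer ℂ k).eval s / k.factorial * z ^ k) ((1 - z) ^ (-s)) := by
  have h := (one_div_one_sub_cpow_hasFPowerSeriesOnBall_zero s).hasSum (y := z)
    (by rwa [Metric.mem_eball, edist_zero_right, ← ofReal_norm, ENNReal.ofReal_lt_one])
  simpa [FormalMultilinearSeries.ofScalars_apply_eq, Ring.choose_add_sub_one_eq_ascPochhammer_div,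
    cpow_neg, mul_comm] using h

theorem hasSum_ascPochhammer_div_factorial_succ_mul_pow {s z : ℂ} (hs : s ≠ 1) (hz0 : z ≠ 0)
    (hz : ‖z‖ < 1) :
    HasSum (fun k : ℕ ↦ (ascPochhammer ℂ k).eval s / (k + 1).factorial * z ^ k)
      (((1 - z) ^ (1 - s) - 1) / ((s - 1) * z)) := by
  have hc : (s - 1) * z ≠ 0 := mul_ne_zero (sub_ne_zero.mpr hs) hz0
  have h := (hasSum_nat_add_iff' 1).mpr (hasSum_ascPochhammer_div_factorial_mul_pow (s - 1) hz)
  rw [← hasSum_mul_left_iff hc, mul_div_cancel₀ _ hc]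
  convert! h using 1
  · funext k
    rw [ascPochhammer_eval_sub_one_succ]
    ring
  · simp [neg_sub]

theorem summable_ascPochhammer_div_factorial_mul_pow (M : ℝ) {r : ℝ} (hr0 : 0 ≤ r) (hr : r < 1) :
    Summable (fun k : ℕ ↦ (ascPochhammer ℝ k).eval M / k.factorial * r ^ k) := by
  rw [← summable_ofReal]
  refine (hasSum_ascPochhammer_div_factorial_mul_pow M
    (z := r) (by rwa [norm_real, Real.norm_of_nonneg hr0])).summable.congr fun k ↦ ?_
  have hM : (ascPochhammer ℂ k).eval (M : ℂ) = (((ascPochhammer ℝ k).eval M : ℝ) : ℂ) := by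
    rw [ascPochhammer_eval₂ (algebraMap ℝ ℂ)]
    exact eval₂_at_apply _ _
  push_cast [hM]
  rfl

theorem summable_ascPochhammer_div_factorial_mul_half_pow_add_two (M : ℝ) :
    Summable (fun k : ℕ ↦
      (ascPochhammer ℝ (k + 2)).eval M / (k + 2).factorial * (1 / 2) ^ (k + 2)) :=
  (summable_nat_add_iff 2).mpr
    (summable_ascPochhammer_div_factorial_mul_pow M (by norm_num) (by norm_num))

noncomputable def zetaSeriesCoeff (s : ℂ) (k : ℕ) : ℂ :=
  ((k : ℂ) + 2 - 1) * (ascPochhammer ℂ (k + 2)).eval s / ((k + 3).factorial : ℂ)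

noncomputable def zetaSeries (s : ℂ) : ℂ :=
  ∑' k : ℕ, zetaSeriesCoeff s k * (riemannZeta (s + ((k : ℂ) + 2)) - 1)

theorem norm_zetaSeriesCoeff_le {s : ℂ} {M : ℝ} (hs : ‖s‖ ≤ M) (k : ℕ) :
    ‖zetaSeriesCoeff s k‖ ≤ (ascPochhammer ℝ (k + 2)).eval M / (k + 2).factorial := by
  have hfac : ((k + 3).factorial : ℝ) = (k + 3) * (k + 2).factorial := by
    push_cast [Nat.factorial_succ]; ring
  have hk : ‖(k : ℂ) + 2 - 1‖ = k + 1 := by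
    rw [show (k : ℂ) + 2 - 1 = ((k + 1 : ℕ) : ℂ) by push_cast; ring, norm_natCast]
    push_cast; rfl
  rw [zetaSeriesCoeff, norm_div, norm_mul, hk, norm_natCast, hfac, mul_div_mul_comm]
  refine (mul_le_of_le_one_left (by positivity)
    ((div_le_one (by positivity)).mpr (by linarith))).trans ?_
  gcongr
  exact norm_ascPochhammer_eval_le hs _

theorem hasSum_zetaSeriesCoeff_mul_pow {s z : ℂ} (hs : s ≠ 1) (hz0 : z ≠ 0) (hz : ‖z‖ < 1) :
    HasSum (fun k : ℕ ↦ zetaSeriesCoeff s k * z ^ (k + 2))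
      ((1 - z) ^ (-s) + 1 - 2 * (((1 - z) ^ (1 - s) - 1) / ((s - 1) * z))) := by
  have hA := (hasSum_nat_add_iff' 2).mpr (hasSum_ascPochhammer_div_factorial_mul_pow s hz)
  have hB := (hasSum_nat_add_iff' 2).mpr
    (hasSum_ascPochhammer_div_factorial_succ_mul_pow hs hz0 hz)
  -- `(k + 1) / (k + 3)! = 1 / (k + 2)! - 2 / (k + 3)!`
  convert! hA.sub (hB.mul_left 2) using 1
  · funext k
    have hk : (k : ℂ) + 2 + 1 ≠ 0 := by exact_mod_cast (k + 2).succ_ne_zero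
    rw [zetaSeriesCoeff, show k + 3 = k + 2 + 1 from rfl, Nat.factorial_succ]
    push_cast
    field_simp
    ring
  · rw [Finset.sum_range_succ, Finset.sum_range_one, Finset.sum_range_succ, Finset.sum_range_one,
      ascPochhammer_zero, ascPochhammer_one, eval_one, eval_X]
    simp only [Nat.factorial, Nat.cast_one]
    ring

lemma cpow_neg_add_natCast_add_two {a : ℂ} (ha : a ≠ 0) (s : ℂ) (k : ℕ) :
    a ^ (-(s + ((k : ℂ) + 2))) = a ^ (-s) * a⁻¹ ^ (k + 2) := by
  rw [neg_add, cpow_add _ _ ha, cpow_neg _ ((k : ℂ) + 2), inv_pow,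
    show (k : ℂ) + 2 = ((k + 2 : ℕ) : ℂ) by push_cast; ring, cpow_natCast]

theorem hasSum_zetaSeriesCoeff_mul_cpow {s : ℂ} (hs : s ≠ 1) {a : ℝ} (ha : 1 < a) :
    HasSum (fun k : ℕ ↦ zetaSeriesCoeff s k * (a : ℂ) ^ (-(s + ((k : ℂ) + 2))))
      (((a - 1 : ℝ) : ℂ) ^ (-s) + (a : ℂ) ^ (-s)
        - 2 * ((((a - 1 : ℝ) : ℂ) ^ (1 - s) - (a : ℂ) ^ (1 - s)) / (s - 1))) := by
  have ha0 : (a : ℂ) ≠ 0 := ofReal_ne_zero.mpr (by positivity)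
  have hz : ‖(a : ℂ)⁻¹‖ < 1 := by
    rw [norm_inv, norm_real, Real.norm_of_nonneg (by positivity)]
    exact inv_lt_one_of_one_lt₀ ha
  have hsplit (w : ℂ) : ((a - 1 : ℝ) : ℂ) ^ w = (a : ℂ) ^ w * (1 - (a : ℂ)⁻¹) ^ w := by
    have h := mul_cpow_ofReal_nonneg (by positivity : (0 : ℝ) ≤ a)
      (sub_nonneg.mpr (inv_le_one_of_one_le₀ ha.le)) w
    rw [← ofReal_mul, mul_sub, mul_one, mul_inv_cancel₀ (by positivity)] at h
    simpa using h
  have h1s : (a : ℂ) ^ (1 - s) = (a : ℂ) * (a : ℂ) ^ (-s) := by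
    rw [sub_eq_add_neg, cpow_add _ _ ha0, cpow_one]
  convert! (hasSum_zetaSeriesCoeff_mul_pow hs (inv_ne_zero ha0) hz).mul_left ((a : ℂ) ^ (-s))
    using 1
  · funext k
    rw [cpow_neg_add_natCast_add_two ha0]
    ring
  · rw [hsplit, hsplit, h1s]
    field_simp

theorem hasSum_nat_add_one_cpow_neg {w : ℂ} (hw : 1 < w.re) :
    HasSum (fun n : ℕ ↦ ((n : ℂ) + 1) ^ (-w)) (riemannZeta w) := by
  simpa [LSeries.term, cpow_neg] using (hasSum_nat_add_iff' 1).mpr (LSeriesHasSum_one hw)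

theorem hasSum_nat_add_two_cpow_neg {w : ℂ} (hw : 1 < w.re) :
    HasSum (fun n : ℕ ↦ ((n : ℂ) + 2) ^ (-w)) (riemannZeta w - 1) := by
  convert! (hasSum_nat_add_iff' 1).mpr (hasSum_nat_add_one_cpow_neg hw) using 1
  · funext n; push_cast; ring_nf
  · simp

lemma norm_natCast_add_two_cpow (n : ℕ) (w : ℂ) :
    ‖((n : ℂ) + 2) ^ w‖ = ((n : ℝ) + 2) ^ w.re := by
  rw [show (n : ℂ) + 2 = ((n + 2 : ℕ) : ℂ) by push_cast; rfl, norm_natCast_cpow_of_pos (by omega)]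
  push_cast; rfl

theorem summable_natCast_add_two_rpow_neg {σ : ℝ} (hσ : 1 < σ) :
    Summable (fun n : ℕ ↦ ((n : ℝ) + 2) ^ (-σ)) := by
  simpa using (summable_nat_add_iff 2).mpr (Real.summable_nat_rpow.mpr (by linarith : -σ < -1))

theorem norm_riemannZeta_sub_one_le {σ : ℝ} (hσ : 1 < σ) {w : ℂ} (hw : σ ≤ w.re) :
    ‖riemannZeta w - 1‖ ≤ 2 ^ (σ - w.re) * ∑' n : ℕ, ((n : ℝ) + 2) ^ (-σ) := by
  refine (hasSum_nat_add_two_cpow_neg (hσ.trans_le hw)).norm_le_of_bounded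
    ((summable_natCast_add_two_rpow_neg hσ).hasSum.mul_left _) fun n ↦ ?_
  have hn : (0 : ℝ) < n + 2 := by positivity
  rw [norm_natCast_add_two_cpow, neg_re,
    show -w.re = -σ + (σ - w.re) by ring, Real.rpow_add hn, mul_comm]
  exact mul_le_mul_of_nonneg_right
    (Real.rpow_le_rpow_of_nonpos two_pos (by linarith) (by linarith)) (by positivity)

theorem tendsto_natCast_add_one_cpow {w : ℂ} (hw : w.re < 0) :
    Tendsto (fun n : ℕ ↦ ((n : ℂ) + 1) ^ w) atTop (𝓝 0) := by
  rw [tendsto_zero_iff_norm_tendsto_zero]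
  refine ((tendsto_rpow_neg_atTop (neg_pos.mpr hw)).comp
    (tendsto_natCast_atTop_atTop.atTop_add (tendsto_const_nhds (x := (1 : ℝ))))).congr fun n ↦ ?_
  rw [show (n : ℂ) + 1 = ((n + 1 : ℕ) : ℂ) by push_cast; rfl, norm_natCast_cpow_of_pos (by omega)]
  simp

theorem Summable.hasSum_sub_succ {G : Type*} [AddCommGroup G] [TopologicalSpace G]
    [IsTopologicalAddGroup G] [T2Space G] {f : ℕ → G} {l : G}
    (h : Summable fun n ↦ f n - f (n + 1)) (hf : Tendsto f atTop (𝓝 l)) :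
    HasSum (fun n ↦ f n - f (n + 1)) (f 0 - l) := by
  refine h.hasSum_iff_tendsto_nat.mpr ?_
  simp_rw [Finset.sum_range_sub']
  exact tendsto_const_nhds.sub hf

theorem summable_zetaSeriesCoeff_mul_cpow_prod {s : ℂ} (hs : 1 < s.re) :
    Summable (fun p : ℕ × ℕ ↦
      zetaSeriesCoeff s p.2 * ((p.1 : ℂ) + 2) ^ (-(s + ((p.2 : ℂ) + 2)))) := by
  refine .of_norm_bounded ((summable_natCast_add_two_rpow_neg hs).mul_of_nonneg
    (summable_ascPochhammer_div_factorial_mul_half_pow_add_two ‖s‖) (fun _ ↦ by positivity)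
    (fun k ↦ by have := ascPochhammer_eval_nonneg (norm_nonneg s) (k + 2); positivity)) ?_
  rintro ⟨n, k⟩
  have hn : (n : ℂ) + 2 ≠ 0 := by exact_mod_cast (n + 1).succ_ne_zero
  have hinv : ‖((n : ℂ) + 2)⁻¹‖ ≤ 1 / 2 := by
    rw [norm_inv, one_div, show (n : ℂ) + 2 = ((n + 2 : ℕ) : ℂ) by push_cast; rfl, norm_natCast]
    exact inv_anti₀ two_pos (by simp)
  rw [cpow_neg_add_natCast_add_two hn, norm_mul, norm_mul, norm_pow, norm_natCast_add_two_cpow,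
    neg_re]
  have hP := ascPochhammer_eval_nonneg (norm_nonneg s) (k + 2)
  exact (mul_le_mul (norm_zetaSeriesCoeff_le le_rfl k)
    (mul_le_mul_of_nonneg_left (pow_le_pow_left₀ (norm_nonneg _) hinv _) (by positivity))
    (by positivity) (by positivity)).trans_eq (by ring)

theorem riemannZeta_eq_of_one_lt_re {s : ℂ} (hs : 1 < s.re) :
    riemannZeta s = 1 / (s - 1) + 1 / 2 + 1 / 2 * zetaSeries s := by
  have hs1 : s - 1 ≠ 0 := sub_ne_zero.mpr (by rintro rfl; norm_num at hs)
  set F : ℕ → ℕ → ℂ := fun n k ↦ zetaSeriesCoeff s k * ((n : ℂ) + 2) ^ (-(s + ((k : ℂ) + 2)))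
  set f : ℕ → ℂ := fun n ↦ ((n : ℂ) + 1) ^ (1 - s)
  set row : ℕ → ℂ := fun n ↦ ((n : ℂ) + 1) ^ (-s) + ((n : ℂ) + 2) ^ (-s)
    - 2 * ((f n - f (n + 1)) / (s - 1))
  have hF : Summable (Function.uncurry F) := summable_zetaSeriesCoeff_mul_cpow_prod hs
  have hcol (k : ℕ) : HasSum (fun n ↦ F n k)
      (zetaSeriesCoeff s k * (riemannZeta (s + ((k : ℂ) + 2)) - 1)) := by
    refine (hasSum_nat_add_two_cpow_neg ?_).mul_left _
    simp only [add_re, natCast_re, re_ofNat]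
    linarith [k.cast_nonneg (α := ℝ)]
  have hrow (n : ℕ) : HasSum (F n) (row n) := by
    convert hasSum_zetaSeriesCoeff_mul_cpow (sub_ne_zero.mp hs1) (a := n + 2)
      (by norm_cast; omega) using 1
    · push_cast; rfl
    · simp only [row, f]; push_cast; ring_nf
  have hA := hasSum_nat_add_one_cpow_neg hs
  have hB := hasSum_nat_add_two_cpow_neg hs
  have htele : HasSum (fun n ↦ f n - f (n + 1)) 1 := by
    have hsum : Summable (fun n ↦ f n - f (n + 1)) := by
      refine (((hA.add hB).sub (hF.hasSum.prod_fiberwise fun n ↦ hrow n)).summable.mul_left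
        ((s - 1) / 2)).congr fun n ↦ ?_
      simp only [row]
      field_simp
      ring
    simpa [f] using hsum.hasSum_sub_succ (tendsto_natCast_add_one_cpow (by simpa using hs))
  have hrows := (hA.add hB).sub ((htele.div_const (s - 1)).mul_left 2)
  have : zetaSeries s = riemannZeta s + (riemannZeta s - 1) - 2 * (1 / (s - 1)) := calc
    zetaSeries s = ∑' k, ∑' n, F n k := tsum_congr fun k ↦ (hcol k).tsum_eq.symm
    _ = ∑' n, ∑' k, F n k := hF.tsum_comm
    _ = ∑' n, row n := tsum_congr fun n ↦ (hrow n).tsum_eq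
    _ = _ := hrows.tsum_eq
  rw [this]
  field_simp
  ring

theorem differentiableAt_zetaSeriesCoeff_mul (k : ℕ) {s : ℂ} (hs : -1 < s.re) :
    DifferentiableAt ℂ
      (fun z ↦ zetaSeriesCoeff z k * (riemannZeta (z + ((k : ℂ) + 2)) - 1)) s := by
  have hne : s + ((k : ℂ) + 2) ≠ 1 := by
    intro h
    have := congrArg re h
    simp only [add_re, natCast_re, re_ofNat, one_re] at this
    linarith [k.cast_nonneg (α := ℝ)]
  have hζ := (differentiableAt_riemannZeta hne).comp s (differentiableAt_id.add_const _)
  have hp := (ascPochhammer ℂ (k + 2)).differentiable.differentiableAt (x := s)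
  exact ((hp.const_mul _).div_const _).mul (hζ.sub_const 1)

theorem differentiableAt_zetaSeries {s₀ : ℂ} (hs₀ : -1 < s₀.re) :
    DifferentiableAt ℂ zetaSeries s₀ := by
  set τ := (s₀.re - 1) / 2
  set R := ‖s₀‖ + 1
  set U := {s : ℂ | τ < s.re} ∩ Metric.ball 0 R
  have hU : IsOpen U := (isOpen_lt continuous_const continuous_re).inter Metric.isOpen_ball
  have hs₀U : s₀ ∈ U := ⟨by simp only [Set.mem_ofPred_eq, τ]; linarith, by simp [R]⟩
  have hτ : -1 < τ := by simp only [τ]; linarith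
  set S := ∑' n : ℕ, ((n : ℝ) + 2) ^ (-(τ + 2))
  have hbound (k : ℕ) (s : ℂ) (hs : s ∈ U) :
      ‖zetaSeriesCoeff s k * (riemannZeta (s + ((k : ℂ) + 2)) - 1)‖ ≤
        4 * S * ((ascPochhammer ℝ (k + 2)).eval R / (k + 2).factorial * (1 / 2) ^ (k + 2)) := by
    obtain ⟨hτs : τ < s.re, hball⟩ := hs
    have hsR : ‖s‖ ≤ R := by simpa using (Metric.mem_ball.mp hball).le
    have hre : (s + ((k : ℂ) + 2)).re = s.re + k + 2 := by simp only [add_re, natCast_re, re_ofNat]; ring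
    have hζ := norm_riemannZeta_sub_one_le (by linarith : 1 < τ + 2) (by rw [hre]; linarith)
    have h2 : (2 : ℝ) ^ (τ + 2 - (s + ((k : ℂ) + 2)).re) ≤ 4 * (1 / 2) ^ (k + 2) := calc
      _ ≤ (2 : ℝ) ^ (-(k : ℝ)) :=
        Real.rpow_le_rpow_of_exponent_le one_le_two (by rw [hre]; linarith)
      _ = 4 * (1 / 2) ^ (k + 2) := by
        rw [Real.rpow_neg zero_le_two, Real.rpow_natCast, one_div, inv_pow, pow_add]
        field_simp
        norm_num
    have hS : 0 ≤ S := tsum_nonneg fun n ↦ by positivity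
    have hP := ascPochhammer_eval_nonneg (by positivity : 0 ≤ R) (k + 2)
    rw [norm_mul]
    exact (mul_le_mul (norm_zetaSeriesCoeff_le hsR k)
      (hζ.trans (mul_le_mul_of_nonneg_right h2 hS)) (norm_nonneg _) (by positivity)).trans_eq
      (by ring)
  refine (differentiableOn_tsum_of_summable_norm
    ((summable_ascPochhammer_div_factorial_mul_half_pow_add_two R).mul_left (4 * S))
    (fun k s hs ↦ (differentiableAt_zetaSeriesCoeff_mul k ?_).differentiableWithinAt) hU hbound
    ).differentiableAt (hU.mem_nhds hs₀U)
  exact hτ.trans hs.1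

lemma starConvex_setOf_one_sub_mem_slitPlane : StarConvex ℝ 0 {z : ℂ | 1 - z ∈ slitPlane} := by
  intro z hz a b ha hb hab
  show 1 - (a • 0 + b • z) ∈ slitPlane
  convert starConvex_one_slitPlane hz ha hb hab using 1
  have hab' : (a : ℂ) + b = 1 := by exact_mod_cast hab
  rw [smul_zero, zero_add, real_smul, real_smul, real_smul]
  linear_combination -hab'

theorem riemannZeta_eqOn_re_gt_neg_one_inter_slitPlane :
    Set.EqOn riemannZeta (fun z ↦ 1 / (z - 1) + 1 / 2 + 1 / 2 * zetaSeries z)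
      ({z : ℂ | -1 < z.re} ∩ {z : ℂ | 1 - z ∈ slitPlane}) := by
  set D := {z : ℂ | -1 < z.re} ∩ {z : ℂ | 1 - z ∈ slitPlane}
  have hD : IsOpen D := (isOpen_lt continuous_const continuous_re).inter
    (isOpen_slitPlane.preimage (continuous_const.sub continuous_id))
  have hD1 : ∀ z ∈ D, z ≠ 1 := fun z hz h ↦ slitPlane_ne_zero hz.2 (by rw [h, sub_self])
  have hrhs : AnalyticOnNhd ℂ (fun z ↦ 1 / (z - 1) + 1 / 2 + 1 / 2 * zetaSeries z) D := by
    refine DifferentiableOn.analyticOnNhd (fun z hz ↦ DifferentiableAt.differentiableWithinAt ?_) hD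
    have hpole : DifferentiableAt ℂ (fun z : ℂ ↦ 1 / (z - 1)) z :=
      (differentiableAt_const _).div (differentiableAt_id.sub_const 1) (sub_ne_zero.mpr (hD1 z hz))
    exact (hpole.add_const _).add ((differentiableAt_zetaSeries hz.1).const_mul _)
  have hpre : IsPreconnected D := ((((convex_halfSpace_re_gt (-1)).starConvex (by simp)).inter
    starConvex_setOf_one_sub_mem_slitPlane).isPathConnected (by simp)).isConnected.isPreconnected
  have h2I : 2 + I ∈ D := ⟨by norm_num, by simp [mem_slitPlane_iff]⟩
  have heq : riemannZeta =ᶠ[𝓝 (2 + I)] fun z ↦ 1 / (z - 1) + 1 / 2 + 1 / 2 * zetaSeries z := by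
    filter_upwards [(isOpen_lt continuous_const continuous_re).mem_nhds
      (by simp : (1 : ℝ) < (2 + I).re)] with z hz using riemannZeta_eq_of_one_lt_re hz
  exact (analyticOn_riemannZeta.mono hD1).eqOn_of_preconnected_of_eventuallyEq hrhs hpre h2I heq

theorem zeta_eq_p_two_series (s : ℂ) (hs : -1 < s.re) (hs1 : s ≠ 1) :
    riemannZeta s =
      1 / (s - 1) + 1 / 2 +
        (1 / 2) * ∑' k : ℕ, (((k : ℂ) + 2) - 1) * (ascPochhammer ℂ (k + 2)).eval s /
          ((k + 3).factorial : ℂ) * (riemannZeta (s + ((k : ℂ) + 2)) - 1) := by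
  change riemannZeta s = 1 / (s - 1) + 1 / 2 + 1 / 2 * zetaSeries s
  rcases lt_or_ge 1 s.re with hs' | hs'
  · exact riemannZeta_eq_of_one_lt_re hs'
  refine riemannZeta_eqOn_re_gt_neg_one_inter_slitPlane ⟨hs, mem_slitPlane_iff.mpr ?_⟩
  rcases hs'.lt_or_eq with h | h
  · exact Or.inl (by simpa using h)
  · exact Or.inr fun him ↦ hs1 (Complex.ext (by simpa using h) (by simpa using him))
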